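/- arXiv:1311.7390 — 4 statements merged into one kernel-verified Lean document; each statement's English description precedes it below -/
import Mathlib

section
/- Let EI > 0, k > 0, c ∈ ℝ, A ∈ ℝ, and set ω := (k/EI)^{1/4}, P_C := 2√(k·EI). Define y₁(x) := A·cos(ωx) and y₂(x) := c·A²·(9 + cos(2ωx))/(18k). Then for all x ∈ ℝ, EI·y₂''''(x) + P_C·y₂''(x) + k·y₂(x) = c·y₁(x)². (This is the second-order equation of the double-scale perturbation expansion y = ε y₁ + ε² y₂ + …, verifying that y₂ is the correct second-order correction.) -/
/-!
Since `ω⁴ = k / EI`, the wavenumber satisfies `EI ω⁴ = k` and `P_C ω² = 2k`. Hence the operator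
`EI D⁴ + P_C D² + k` multiplies constants by `k` and `cos (2ωx)` by `16k - 8k + k = 9k`, so it sends
`y₂` to `c A² (1 + cos (2ωx)) / 2 = c A² cos² (ωx)`.
-/

open Real

theorem iteratedDeriv_even_cos_mul (b : ℝ) (n : ℕ) :
    iteratedDeriv (2 * n) (fun t => cos (b * t)) = fun t => (-b ^ 2) ^ n * cos (b * t) := by
  rw [iteratedDeriv_comp_const_mul contDiff_cos, iteratedDeriv_even_cos]
  ext t
  simp only [Pi.mul_apply, Pi.pow_apply, Pi.neg_apply, Pi.one_apply, pow_mul]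
  ring

theorem iteratedDeriv_even_const_add_cos_mul (a b x : ℝ) {n : ℕ} (hn : 0 < n) :
    iteratedDeriv (2 * n) (fun t => a + cos (b * t)) x = (-b ^ 2) ^ n * cos (b * x) := by
  rw [iteratedDeriv_const_add (by omega), iteratedDeriv_even_cos_mul]

section

variable {a b : ℝ} (ha : 0 < a) (hb : 0 ≤ b)
include ha hb

theorem mul_div_rpow_one_div_four_pow_four : a * ((b / a) ^ ((1 : ℝ) / 4)) ^ 4 = b := by
  rw [← rpow_natCast, ← rpow_mul (by positivity)]
  norm_num
  field_simp

theorem sqrt_mul_mul_div_rpow_one_div_four_sq :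
    √(b * a) * ((b / a) ^ ((1 : ℝ) / 4)) ^ 2 = b := by
  rw [← rpow_natCast, ← rpow_mul (by positivity), show (1 : ℝ) / 4 * (2 : ℕ) = 1 / 2 by norm_num,
    ← sqrt_eq_rpow, ← sqrt_mul (by positivity), show b * a * (b / a) = b * b by field_simp,
    sqrt_mul_self hb]

end

/-- Second-order equation of the double-scale perturbation expansion for the
strut on a softening elastic foundation: with `y₁(x) = A·cos(ωx)` and
`y₂(x) = c·A²·(9 + cos(2ωx))/(18k)`, one has
`EI·y₂'''' + P_C·y₂'' + k·y₂ = c·y₁²` at the critical load `P_C = 2√(k·EI)`. -/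
theorem strut_second_order_perturbation
    (EI k c A : ℝ) (hEI : 0 < EI) (hk : 0 < k)
    (ω PC : ℝ) (hω : ω = (k / EI) ^ ((1 : ℝ) / 4)) (hPC : PC = 2 * Real.sqrt (k * EI)) :
    ∀ x : ℝ,
      EI * iteratedDeriv 4 (fun t => c * A ^ 2 * (9 + Real.cos (2 * ω * t)) / (18 * k)) x
        + PC * iteratedDeriv 2 (fun t => c * A ^ 2 * (9 + Real.cos (2 * ω * t)) / (18 * k)) x
        + k * (c * A ^ 2 * (9 + Real.cos (2 * ω * x)) / (18 * k))
      = c * (A * Real.cos (ω * x)) ^ 2 := by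
  intro x
  have hω4 : EI * ω ^ 4 = k := hω ▸ mul_div_rpow_one_div_four_pow_four hEI hk.le
  have hPCω2 : PC * ω ^ 2 = 2 * k := by
    rw [hPC, hω, mul_assoc, sqrt_mul_mul_div_rpow_one_div_four_sq hEI hk.le]
  have d2 : iteratedDeriv 2 (fun t => 9 + cos (2 * ω * t)) x
      = (-(2 * ω) ^ 2) ^ 1 * cos (2 * ω * x) :=
    iteratedDeriv_even_const_add_cos_mul 9 (2 * ω) x one_pos
  have d4 : iteratedDeriv 4 (fun t => 9 + cos (2 * ω * t)) x
      = (-(2 * ω) ^ 2) ^ 2 * cos (2 * ω * x) :=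
    iteratedDeriv_even_const_add_cos_mul 9 (2 * ω) x two_pos
  have hcos : cos (2 * ω * x) = 2 * cos (ω * x) ^ 2 - 1 := by rw [mul_assoc, cos_two_mul]
  simp only [iteratedDeriv_div_const, iteratedDeriv_const_mul_field, d2, d4, mul_pow A]
  field_simp
  linear_combination (16 * c * A ^ 2 * cos (2 * ω * x)) * hω4
    - (4 * c * A ^ 2 * cos (2 * ω * x)) * hPCω2 + (9 * k * c * A ^ 2) * hcos
end

section
/- Let B > 0, T > 0 and M ∈ ℝ, and let V(θ) := (M²/(2B))·(1 − cos θ)/(1 + cos θ) − T·(1 − cos θ) for θ ∈ (−π, π), with m := M/√(B·T). (i) If 0 < m < 2 then the critical points of V in (0, π) are exactly the single point θ* = arccos(m − 1). (ii) If m ≥ 2 or M = 0 then θ = 0 is the only critical point of V in (−π, π). Thus the nontrivial (helical) equilibrium path exists exactly for loads 0 < m < 2, bifurcating subcritically from the trivial path at m = 2. -/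
/-!
Writing `a = M²/(2B)`, the derivative of `V` is `sin θ · (2a/(1 + cos θ)² − T)`, and
`2a = m²T`. On `(−π, π)` we have `1 + cos θ > 0`, so `V'(θ) = 0` exactly when `θ = 0` or
`1 + cos θ = |m|`. For `0 < m < 2` the second alternative is `θ = arccos (m − 1)`; for
`m ≥ 2` it forces `cos θ = 1`, i.e. `θ = 0`, and for `m = 0` it is impossible.
-/

open Real Set

namespace Rod

/-- The equivalent-oscillator potential with `a = M²/(2B)`. -/
noncomputable def potential (a T θ : ℝ) : ℝ :=
  a * ((1 - cos θ) / (1 + cos θ)) - T * (1 - cos θ)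

lemma one_add_cos_pos {θ : ℝ} (hθ : θ ∈ Ioo (-π) π) : 0 < 1 + cos θ := by
  have hhalf : 0 < cos (θ / 2) := cos_pos_of_mem_Ioo ⟨by linarith [hθ.1], by linarith [hθ.2]⟩
  have hdouble : cos θ = 2 * cos (θ / 2) ^ 2 - 1 := by
    rw [← cos_two_mul, mul_div_cancel₀ θ two_ne_zero]
  rw [hdouble]
  linarith [pow_pos hhalf 2]

lemma hasDerivAt_potential (a T : ℝ) {θ : ℝ} (hθ : 1 + cos θ ≠ 0) :
    HasDerivAt (potential a T) (sin θ * (2 * a / (1 + cos θ) ^ 2 - T)) θ := by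
  have hnum : HasDerivAt (fun θ => 1 - cos θ) (sin θ) θ := by
    simpa using (hasDerivAt_cos θ).const_sub 1
  have hden : HasDerivAt (fun θ => 1 + cos θ) (-sin θ) θ := by
    simpa using (hasDerivAt_cos θ).const_add 1
  refine (((hnum.div hden hθ).const_mul a).sub (hnum.const_mul T)).congr_deriv ?_
  field_simp
  ring

lemma deriv_potential_eq_zero_iff {a T m θ : ℝ} (hT : 0 < T) (ha : 2 * a = m ^ 2 * T)
    (hθ : θ ∈ Ioo (-π) π) :
    deriv (potential a T) θ = 0 ↔ θ = 0 ∨ 1 + cos θ = |m| := by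
  have hc := one_add_cos_pos hθ
  rw [(hasDerivAt_potential a T hc.ne').deriv, mul_eq_zero,
    sin_eq_zero_iff_of_lt_of_lt hθ.1 hθ.2, sub_eq_zero, div_eq_iff (by positivity), ha,
    mul_comm T, mul_left_inj' hT.ne', sq_eq_sq_iff_abs_eq_abs, abs_of_pos hc, eq_comm (a := |m|)]

lemma cos_eq_iff_eq_arccos {θ x : ℝ} (hθ : θ ∈ Icc 0 π) (hx : x ∈ Icc (-1) 1) :
    cos θ = x ↔ θ = arccos x :=
  ⟨fun h => (arccos_eq_of_eq_cos hθ.1 hθ.2 h.symm).symm,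
    fun h => h ▸ cos_arccos hx.1 hx.2⟩

lemma eq_zero_of_one_add_cos_eq {θ m : ℝ} (hθ : θ ∈ Ioo (-π) π) (hm : 2 ≤ |m| ∨ m = 0)
    (h : 1 + cos θ = |m|) : θ = 0 := by
  rcases hm with hm | rfl
  · have hcos : cos θ = 1 := le_antisymm (cos_le_one θ) (by linarith)
    exact (cos_eq_one_iff_of_lt_of_lt (by linarith [hθ.1, pi_pos])
      (by linarith [hθ.2, pi_pos])).1 hcos
  · linarith [one_add_cos_pos hθ, abs_zero (α := ℝ)]

end Rod

open Rod

/-- Critical points of the rod's equivalent-oscillator potential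
`V(θ) = (M²/(2B))(1−cos θ)/(1+cos θ) − T(1−cos θ)` with `m = M/√(BT)`:
(i) for `0 < m < 2` the unique critical point in `(0, π)` is
`θ* = arccos(m − 1)` (the helical path); (ii) for `m ≥ 2` or `M = 0` the only
critical point in `(−π, π)` is `θ = 0`. The helix thus exists exactly for
`0 < m < 2`, bifurcating subcritically at `m = 2`. -/
theorem rod_helical_critical_points
    (B T M : ℝ) (hB : 0 < B) (hT : 0 < T)
    (V : ℝ → ℝ)
    (hV : V = fun θ =>
      M ^ 2 / (2 * B) * ((1 - Real.cos θ) / (1 + Real.cos θ)) - T * (1 - Real.cos θ))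
    (m : ℝ) (hm : m = M / Real.sqrt (B * T)) :
    (0 < m → m < 2 →
      ∀ θ ∈ Set.Ioo (0 : ℝ) Real.pi, (deriv V θ = 0 ↔ θ = Real.arccos (m - 1))) ∧
    (2 ≤ m ∨ M = 0 →
      ∀ θ ∈ Set.Ioo (-Real.pi) Real.pi, (deriv V θ = 0 ↔ θ = 0)) := by
  have hV_potential : V = potential (M ^ 2 / (2 * B)) T := hV
  have ha : 2 * (M ^ 2 / (2 * B)) = m ^ 2 * T := by
    rw [hm, div_pow, sq_sqrt (mul_pos hB hT).le]
    field_simp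
  subst hV_potential
  refine ⟨fun hm0 hm2 θ hθ => ?_, fun hload θ hθ => ?_⟩
  · rw [deriv_potential_eq_zero_iff hT ha ⟨by linarith [hθ.1, pi_pos], hθ.2⟩, abs_of_pos hm0,
      or_iff_right hθ.1.ne', ← eq_sub_iff_add_eq', cos_eq_iff_eq_arccos (Ioo_subset_Icc_self hθ)
      ⟨by linarith, by linarith⟩]
  · have hm_abs : 2 ≤ |m| ∨ m = 0 := hload.imp (fun h => h.trans (le_abs_self m))
      (fun h => by rw [hm, h, zero_div])
    rw [deriv_potential_eq_zero_iff hT ha hθ]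
    exact ⟨fun h => h.elim id (eq_zero_of_one_add_cos_eq hθ hm_abs), Or.inl⟩
end

section
/- Let B > 0, T > 0, let 0 < m < 2, set M := m·√(B·T), θ* := arccos(m − 1), and V(θ) := (M²/(2B))·(1 − cos θ)/(1 + cos θ) − T·(1 − cos θ). Then V(θ*) = −T·(2 − m)²/2, which is strictly negative, while V(0) = 0. Hence the helical equilibrium lies strictly below the trivial state in the oscillator potential, and equivalently the structural potential-energy density of the helix exceeds that of the trivial straight rod by T·(2 − m)²/2 > 0 for every 0 < m < 2 (so the free rod has no Maxwell load). -/
/-!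
Since `cos θ* = m − 1` and `M² = m²BT`, the two terms of the potential at the helix are
`(m²T/2)·(2 − m)/m` and `−T(2 − m)`, which add up to `−T(2 − m)²/2`.
-/

open Real

/-- The equivalent-oscillator potential `V_EO`, without the additive constant `M²/2C`. -/
noncomputable def oscillatorPotential (B T M θ : ℝ) : ℝ :=
  M ^ 2 / (2 * B) * ((1 - cos θ) / (1 + cos θ)) - T * (1 - cos θ)

@[simp]
theorem oscillatorPotential_zero (B T M : ℝ) : oscillatorPotential B T M 0 = 0 := by
  simp [oscillatorPotential]

theorem oscillatorPotential_of_cos_eq {B T M m θ : ℝ} (hB : B ≠ 0)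
    (hM : M ^ 2 = m ^ 2 * (B * T)) (hcos : cos θ = m - 1) :
    oscillatorPotential B T M θ = -(T * (2 - m) ^ 2 / 2) := by
  have hden : 1 + cos θ = m := by rw [hcos]; ring
  rw [oscillatorPotential, hden, hM, hcos]
  field_simp
  ring

theorem cos_arccos_sub_one {m : ℝ} (hm0 : 0 ≤ m) (hm2 : m ≤ 2) :
    cos (arccos (m - 1)) = m - 1 :=
  cos_arccos (by linarith) (by linarith)

/-- At the helical equilibrium `θ* = arccos(m − 1)` of the stretched and
twisted rod (`0 < m < 2`, `M = m√(BT)`), the equivalent-oscillator potential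
takes the value `V(θ*) = −T(2 − m)²/2 < 0`, while `V(0) = 0`: the helix lies
strictly below the trivial state in the oscillator potential, so the
structural potential-energy density of the helix exceeds that of the straight
rod by `T(2 − m)²/2 > 0` and the free rod has no Maxwell load. -/
theorem rod_helix_energy_no_maxwell_load
    (B T m : ℝ) (hB : 0 < B) (hT : 0 < T) (hm0 : 0 < m) (hm2 : m < 2)
    (M : ℝ) (hM : M = m * Real.sqrt (B * T))
    (θstar : ℝ) (hθ : θstar = Real.arccos (m - 1))
    (V : ℝ → ℝ)
    (hV : V = fun θ =>
      M ^ 2 / (2 * B) * ((1 - Real.cos θ) / (1 + Real.cos θ)) - T * (1 - Real.cos θ)) :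
    V θstar = -(T * (2 - m) ^ 2 / 2) ∧ V θstar < 0 ∧ V 0 = 0 := by
  have hV : V = oscillatorPotential B T M := hV
  have hM2 : M ^ 2 = m ^ 2 * (B * T) := by
    rw [hM, mul_pow, sq_sqrt (mul_pos hB hT).le]
  have hcos : cos θstar = m - 1 := hθ ▸ cos_arccos_sub_one hm0.le hm2.le
  have hhelix : V θstar = -(T * (2 - m) ^ 2 / 2) :=
    hV ▸ oscillatorPotential_of_cos_eq hB.ne' hM2 hcos
  have hgap : 0 < T * (2 - m) ^ 2 / 2 := by
    have : 0 < 2 - m := by linarith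
    positivity
  exact ⟨hhelix, by linarith, by simp [hV]⟩
end

section
/- Let B > 0, T > 0, 0 < m < 2, set M := m·√(B·T), κ₀ := √(T/B)·√(1 − m²/4), and define θ(s) := arccos(1 − 2(1 − m²/4)·sech²(κ₀ s)) for s ∈ ℝ. Then θ is a smooth function of s taking values in (0, π), it satisfies the equilibrium equation B·θ''(s) + V'(θ(s)) = 0 for all s ∈ ℝ, where V(θ) := (M²/(2B))·(1 − cos θ)/(1 + cos θ) − T·(1 − cos θ), and θ(s) → 0 and θ'(s) → 0 as |s| → ∞. This is the explicit localized (homoclinic) post-buckling solution of the stretched and twisted rod. -/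
open Real Filter Topology

private lemma rod_cosh_lb (x : ℝ) : (1 + |x|) / 2 ≤ Real.cosh x := by
  rw [← Real.cosh_abs, Real.cosh_eq]
  have h1 := Real.add_one_le_exp |x|
  have h2 := (Real.exp_pos (-|x|)).le
  linarith

private lemma rod_alg (Bv Tv a X S : ℝ) (hB : Bv ≠ 0) (hX : (1:ℝ) + S ≠ 0)
    (hXS : X = 1 + S) :
    Bv * (-(4*a*(Tv/Bv*a)/X - 12*a*(Tv/Bv*a)*S/X^2) * (1 - (1-2*a/X)^2)
        - (1-2*a/X)*(16*a^2*(Tv/Bv*a)*S/X^3)) * (Bv*(1+(1-2*a/X))^2)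
      + ((4*(1-a)*(Bv*Tv)) - Tv*(Bv*(1+(1-2*a/X))^2)) * (1 - (1-2*a/X)^2)^2 = 0 := by
  subst hXS
  field_simp
  ring

set_option maxHeartbeats 1600000 in
/-- Explicit localized (homoclinic) post-buckling solution of the stretched
and twisted rod: for `0 < m < 2`, `M = m√(BT)`, `κ₀ = √(T/B)·√(1 − m²/4)`,
the function `θ(s) = arccos(1 − 2(1 − m²/4)·sech²(κ₀ s))` is smooth, takes
values in `(0, π)`, satisfies `B·θ'' + V'(θ) = 0` with
`V(θ) = (M²/(2B))(1−cos θ)/(1+cos θ) − T(1−cos θ)`, and `θ, θ' → 0` as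
`|s| → ∞`. -/
theorem rod_localized_homoclinic_solution
    (B T m : ℝ) (hB : 0 < B) (hT : 0 < T) (hm0 : 0 < m) (hm2 : m < 2)
    (M : ℝ) (hM : M = m * Real.sqrt (B * T))
    (κ₀ : ℝ) (hκ : κ₀ = Real.sqrt (T / B) * Real.sqrt (1 - m ^ 2 / 4))
    (V : ℝ → ℝ)
    (hV : V = fun θ =>
      M ^ 2 / (2 * B) * ((1 - Real.cos θ) / (1 + Real.cos θ)) - T * (1 - Real.cos θ))
    (θ : ℝ → ℝ)
    (hθ : θ = fun s =>
      Real.arccos (1 - 2 * (1 - m ^ 2 / 4) * (1 / Real.cosh (κ₀ * s)) ^ 2)) :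
    ContDiff ℝ (⊤ : ℕ∞) θ ∧
    (∀ s : ℝ, θ s ∈ Set.Ioo 0 Real.pi) ∧
    (∀ s : ℝ, B * iteratedDeriv 2 θ s + deriv V (θ s) = 0) ∧
    Filter.Tendsto θ (Filter.cocompact ℝ) (nhds 0) ∧
    Filter.Tendsto (deriv θ) (Filter.cocompact ℝ) (nhds 0) := by
  have hm4 : m ^ 2 < 4 := by nlinarith
  have ha0' : 0 < 1 - m ^ 2 / 4 := by nlinarith
  obtain ⟨a, ha_def⟩ : ∃ a : ℝ, a = 1 - m ^ 2 / 4 := ⟨_, rfl⟩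
  rw [← ha_def] at ha0' hκ hθ
  have ha0 : 0 < a := ha0'
  have ha1 : a < 1 := by rw [ha_def]; nlinarith
  have hBT : (0:ℝ) < B * T := mul_pos hB hT
  have hc0 : 0 < κ₀ := by
    rw [hκ]
    exact mul_pos (Real.sqrt_pos.2 (div_pos hT hB)) (Real.sqrt_pos.2 ha0)
  have hc2 : κ₀ ^ 2 = T / B * a := by
    rw [hκ, mul_pow, Real.sq_sqrt (div_pos hT hB).le, Real.sq_sqrt ha0.le]
  have hM2 : M ^ 2 = 4 * (1 - a) * (B * T) := by
    rw [hM, mul_pow, Real.sq_sqrt hBT.le, ha_def]; ring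
  -- basic facts about cosh
  have hchpos : ∀ s : ℝ, 0 < Real.cosh (κ₀ * s) := fun s => Real.cosh_pos _
  have hch1 : ∀ s : ℝ, 1 ≤ Real.cosh (κ₀ * s) := fun s => Real.one_le_cosh _
  have hch0 : ∀ s : ℝ, Real.cosh (κ₀ * s) ≠ 0 := fun s => (hchpos s).ne'
  -- the inner function U
  obtain ⟨U, hU_def⟩ : ∃ U : ℝ → ℝ, U = fun s => 1 - 2 * a * (1 / Real.cosh (κ₀ * s)) ^ 2 := ⟨_, rfl⟩
  have hθfun : θ = fun s => Real.arccos (U s) := by simp only [hθ, hU_def]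
  have hHpos : ∀ s : ℝ, 0 < (1 / Real.cosh (κ₀ * s)) ^ 2 := fun s => by positivity
  have hHle : ∀ s : ℝ, (1 / Real.cosh (κ₀ * s)) ^ 2 ≤ 1 := by
    intro s
    have h := hch1 s
    rw [div_pow, one_pow]
    rw [div_le_one (by positivity)]
    nlinarith
  have hU_lt : ∀ s : ℝ, U s < 1 := by
    intro s
    have h1 := hHpos s
    simp only [hU_def]
    nlinarith
  have hU_gt : ∀ s : ℝ, -1 < U s := by
    intro s
    have h1 := hHle s
    have h2 := hHpos s
    simp only [hU_def]
    nlinarith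
  have hU2 : ∀ s : ℝ, 0 < 1 - (U s) ^ 2 := by
    intro s
    have h1 := hU_lt s
    have h2 := hU_gt s
    nlinarith
  obtain ⟨W, hW_def⟩ : ∃ W : ℝ → ℝ, W = fun s => Real.sqrt (1 - (U s) ^ 2) := ⟨_, rfl⟩
  have hW0 : ∀ s : ℝ, 0 < W s := fun s => by rw [hW_def]; exact Real.sqrt_pos.2 (hU2 s)
  have hW2 : ∀ s : ℝ, (W s) ^ 2 = 1 - (U s) ^ 2 := fun s => by rw [hW_def]; exact Real.sq_sqrt (hU2 s).le
  -- derivatives of the inner functions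
  have hA : ∀ s : ℝ, HasDerivAt (fun t : ℝ => κ₀ * t) κ₀ s := fun s => by
    simpa using (hasDerivAt_id s).const_mul κ₀
  have hch' : ∀ s : ℝ, HasDerivAt (fun t : ℝ => Real.cosh (κ₀ * t))
      (κ₀ * Real.sinh (κ₀ * s)) s := fun s => by
    simpa [Function.comp_def, mul_comm] using (Real.hasDerivAt_cosh (κ₀ * s)).comp s (hA s)
  have hsh' : ∀ s : ℝ, HasDerivAt (fun t : ℝ => Real.sinh (κ₀ * t))
      (κ₀ * Real.cosh (κ₀ * s)) s := fun s => by
    simpa [Function.comp_def, mul_comm] using (Real.hasDerivAt_sinh (κ₀ * s)).comp s (hA s)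
  obtain ⟨U', hU'_def⟩ : ∃ U' : ℝ → ℝ, U' = fun s => 4 * a * κ₀ * Real.sinh (κ₀ * s) / (Real.cosh (κ₀ * s)) ^ 3 := ⟨_, rfl⟩
  have hU' : ∀ s : ℝ, HasDerivAt U (U' s) s := by
    intro s
    have h1 : HasDerivAt (fun t : ℝ => (Real.cosh (κ₀ * t))⁻¹)
        (-(κ₀ * Real.sinh (κ₀ * s)) / (Real.cosh (κ₀ * s)) ^ 2) s := (hch' s).inv (hch0 s)
    have h2 := ((h1.pow 2).const_mul (2 * a)).const_sub 1
    have hfe : U = fun t : ℝ => 1 - 2 * a * ((Real.cosh (κ₀ * t))⁻¹) ^ 2 := by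
      simp only [hU_def, one_div]
    rw [hfe, hU'_def]
    refine h2.congr_deriv ?_
    have := hch0 s
    field_simp
    rw [show (2:ℕ) - 1 = 1 from rfl, pow_one]
    linear_combination (2 * 2 * Real.sinh (κ₀ * s)) * mul_one_div_cancel this
  obtain ⟨U'', hU''_def⟩ : ∃ U'' : ℝ → ℝ, U'' = fun s => 4 * a * κ₀ ^ 2 / (Real.cosh (κ₀ * s)) ^ 2
      - 12 * a * κ₀ ^ 2 * (Real.sinh (κ₀ * s)) ^ 2 / (Real.cosh (κ₀ * s)) ^ 4 := ⟨_, rfl⟩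
  have hU'' : ∀ s : ℝ, HasDerivAt U' (U'' s) s := by
    intro s
    have hnum : HasDerivAt (fun t : ℝ => 4 * a * κ₀ * Real.sinh (κ₀ * t))
        (4 * a * κ₀ * (κ₀ * Real.cosh (κ₀ * s))) s := (hsh' s).const_mul _
    have hden : HasDerivAt (fun t : ℝ => (Real.cosh (κ₀ * t)) ^ 3)
        ((3 : ℕ) * (Real.cosh (κ₀ * s)) ^ 2 * (κ₀ * Real.sinh (κ₀ * s))) s := (hch' s).pow 3
    have h2 := hnum.div hden (pow_ne_zero 3 (hch0 s))
    rw [hU'_def, hU''_def]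
    refine h2.congr_deriv ?_
    have h3 := hch0 s
    have h4 := Real.cosh_sq (κ₀ * s)
    field_simp
    ring
  -- first derivative of θ
  obtain ⟨Θ1, hΘ1_def⟩ : ∃ Θ1 : ℝ → ℝ, Θ1 = fun s => -(U' s) / W s := ⟨_, rfl⟩
  have hθ' : ∀ s : ℝ, HasDerivAt θ (Θ1 s) s := by
    intro s
    have h1 := (Real.hasDerivAt_arccos (hU_gt s).ne' (hU_lt s).ne).comp s (hU' s)
    rw [hθfun, hΘ1_def]
    have h2 : HasDerivAt (fun t : ℝ => Real.arccos (U t))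
        (-(1 / Real.sqrt (1 - (U s) ^ 2)) * U' s) s := h1
    convert h2 using 1
    rw [hW_def]
    field_simp
  have hderivθ : deriv θ = Θ1 := funext fun s => (hθ' s).deriv
  -- derivative of W
  obtain ⟨W', hW'_def⟩ : ∃ W' : ℝ → ℝ, W' = fun s => -(U s * U' s) / W s := ⟨_, rfl⟩
  have hW' : ∀ s : ℝ, HasDerivAt W (W' s) s := by
    intro s
    have h1 : HasDerivAt (fun t : ℝ => 1 - (U t) ^ 2) (-(2 * U s ^ 1 * U' s)) s :=
      ((hU' s).pow 2).const_sub 1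
    have h2 := (Real.hasDerivAt_sqrt (hU2 s).ne').comp s h1
    rw [hW'_def, hW_def]
    have h3 : HasDerivAt (fun t : ℝ => Real.sqrt (1 - (U t) ^ 2))
        (1 / (2 * Real.sqrt (1 - (U s) ^ 2)) * -(2 * U s ^ 1 * U' s)) s := h2
    convert h3 using 1
    have h4 : Real.sqrt (1 - (U s) ^ 2) ≠ 0 := by
      rw [show Real.sqrt (1 - (U s) ^ 2) = W s by rw [hW_def]]
      exact (hW0 s).ne'
    field_simp
  -- second derivative of θ
  have hθ'' : ∀ s : ℝ, HasDerivAt Θ1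
      ((-(U'' s) * W s - -(U' s) * W' s) / (W s) ^ 2) s := by
    intro s
    rw [hΘ1_def]
    exact ((hU'' s).neg.div (hW' s) (hW0 s).ne')
  have hiter : ∀ s : ℝ, iteratedDeriv 2 θ s
      = (-(U'' s) * (W s) ^ 2 - U s * (U' s) ^ 2) / (W s) ^ 3 := by
    intro s
    have h0 : iteratedDeriv 2 θ = deriv (deriv θ) := by
      rw [show (2:ℕ) = 1 + 1 from rfl, iteratedDeriv_succ, iteratedDeriv_one]
    rw [h0, hderivθ, (hθ'' s).deriv, hW'_def]
    have h4 := (hW0 s).ne'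
    field_simp
  -- values of cos and sin at θ s
  have hcos : ∀ s : ℝ, Real.cos (θ s) = U s := by
    intro s
    rw [hθfun]
    exact Real.cos_arccos (hU_gt s).le (hU_lt s).le
  have hsin : ∀ s : ℝ, Real.sin (θ s) = W s := by
    intro s
    rw [hθfun, hW_def]
    exact Real.sin_arccos (U s)
  have h1u : ∀ s : ℝ, 0 < 1 + U s := fun s => by linarith [hU_gt s]
  -- derivative of V at θ s
  have hVd : ∀ s : ℝ, deriv V (θ s)
      = M ^ 2 * W s / (B * (1 + U s) ^ 2) - T * W s := by
    intro s
    have hden : 1 + Real.cos (θ s) ≠ 0 := by rw [hcos s]; exact (h1u s).ne'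
    have hnum : HasDerivAt (fun y => 1 - Real.cos y) (Real.sin (θ s)) (θ s) := by
      simpa using (Real.hasDerivAt_cos (θ s)).const_sub 1
    have hden' : HasDerivAt (fun y => 1 + Real.cos y) (-Real.sin (θ s)) (θ s) := by
      simpa using (Real.hasDerivAt_cos (θ s)).const_add 1
    have hd1 := hnum.div hden' hden
    have hd2 := (hd1.const_mul (M ^ 2 / (2 * B))).sub
      (((Real.hasDerivAt_cos (θ s)).const_sub 1).const_mul T)
    have hVd' : HasDerivAt V (M ^ 2 / (2 * B) *
        ((Real.sin (θ s) * (1 + Real.cos (θ s)) - (1 - Real.cos (θ s)) * -Real.sin (θ s))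
          / (1 + Real.cos (θ s)) ^ 2) - T * -(-Real.sin (θ s))) (θ s) := by
      rw [hV]; exact hd2
    rw [hVd'.deriv, hcos s, hsin s]
    have h2 := (h1u s).ne'
    field_simp
    ring
  -- the ODE
  have hODE : ∀ s : ℝ, B * iteratedDeriv 2 θ s + deriv V (θ s) = 0 := by
    intro s
    rw [hiter s, hVd s]
    obtain ⟨X, hX_def⟩ : ∃ X : ℝ, X = (Real.cosh (κ₀ * s)) ^ 2 := ⟨_, rfl⟩
    obtain ⟨S, hS_def⟩ : ∃ S : ℝ, S = (Real.sinh (κ₀ * s)) ^ 2 := ⟨_, rfl⟩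
    have hXS : X = 1 + S := by rw [hX_def, hS_def, Real.cosh_sq]; ring
    have hX0 : X ≠ 0 := by rw [hX_def]; positivity
    have hS0 : (1:ℝ) + S ≤ X := le_of_eq hXS.symm
    have h1S : (1:ℝ) + S ≠ 0 := by rw [← hXS]; exact hX0
    have hu1 : U s = 1 - 2 * a / X := by
      rw [hU_def, hX_def]
      field_simp
    have hu2 : (U' s) ^ 2 = 16 * a ^ 2 * (T / B * a) * S / X ^ 3 := by
      rw [hU'_def, hX_def, hS_def, ← hc2]
      field_simp
      ring
    have hu3 : U'' s = 4 * a * (T / B * a) / X - 12 * a * (T / B * a) * S / X ^ 2 := by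
      simp only [hU''_def, hX_def, hS_def, ← hc2]
      ring
    have hw2 : (W s) ^ 2 = 1 - (U s) ^ 2 := hW2 s
    have hw0 : W s ≠ 0 := (hW0 s).ne'
    have h1u0 : (1 : ℝ) + U s ≠ 0 := (h1u s).ne'
    have key := rod_alg B T a X S hB.ne' h1S hXS
    rw [← hu1, ← hu2, ← hu3, ← hM2] at key
    -- reduce the goal to key
    have hne : B * (1 + U s) ^ 2 ≠ 0 := by
      apply mul_ne_zero hB.ne'
      exact pow_ne_zero 2 h1u0
    have hN : B * (-(U'' s) * (1 - (U s) ^ 2) - U s * (U' s) ^ 2)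
        + (M ^ 2 / (B * (1 + U s) ^ 2) - T) * (1 - (U s) ^ 2) ^ 2 = 0 := by
      have e : (B * (-(U'' s) * (1 - (U s) ^ 2) - U s * (U' s) ^ 2)
          + (M ^ 2 / (B * (1 + U s) ^ 2) - T) * (1 - (U s) ^ 2) ^ 2) * (B * (1 + U s) ^ 2)
          = B * (-(U'' s) * (1 - (U s) ^ 2) - U s * (U' s) ^ 2) * (B * (1 + U s) ^ 2)
            + (M ^ 2 - T * (B * (1 + U s) ^ 2)) * (1 - (U s) ^ 2) ^ 2 := by
        field_simp
        try exact Or.inl trivial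
      have e2 := e.trans key
      rcases mul_eq_zero.mp e2 with h | h
      · exact h
      · exact absurd h hne
    have step : B * ((-(U'' s) * (W s) ^ 2 - U s * (U' s) ^ 2) / (W s) ^ 3)
        + (M ^ 2 * W s / (B * (1 + U s) ^ 2) - T * W s)
        = (B * (-(U'' s) * (W s) ^ 2 - U s * (U' s) ^ 2)
          + (M ^ 2 / (B * (1 + U s) ^ 2) - T) * ((W s) ^ 2) ^ 2) / (W s) ^ 3 := by
      field_simp
    rw [step, hw2, hN, zero_div]
  -- smoothness
  have hsmooth : ContDiff ℝ (⊤ : ℕ∞) θ := by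
    rw [hθfun]
    rw [contDiff_iff_contDiffAt]
    intro s
    have hUc : ContDiff ℝ (⊤ : ℕ∞) U := by
      rw [hU_def]
      apply contDiff_const.sub
      apply contDiff_const.mul
      apply ContDiff.pow
      exact contDiff_const.div (Real.contDiff_cosh.comp (contDiff_const.mul contDiff_id)) hch0
    exact (Real.contDiffAt_arccos (hU_gt s).ne' (hU_lt s).ne).comp s hUc.contDiffAt
  -- range
  have hrange : ∀ s : ℝ, θ s ∈ Set.Ioo 0 Real.pi := by
    intro s
    rw [hθfun]
    constructor
    · exact Real.arccos_pos.2 (hU_lt s)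
    · refine lt_of_le_of_ne (Real.arccos_le_pi _) fun h => ?_
      have := Real.arccos_eq_pi.mp h
      linarith [hU_gt s]
  -- cosh tends to infinity
  have hcoshT : Tendsto (fun s : ℝ => Real.cosh (κ₀ * s)) (cocompact ℝ) atTop := by
    refine tendsto_atTop_mono (f := fun s : ℝ => (1 + |κ₀ * s|) / 2)
      (fun s => rod_cosh_lb (κ₀ * s)) ?_
    have h1 : Tendsto (fun s : ℝ => |s|) (cocompact ℝ) atTop := by
      exact tendsto_norm_cocompact_atTop (E := ℝ)
    have h2 := h1.const_mul_atTop hc0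
    have h3 := tendsto_atTop_add_const_left (cocompact ℝ) 1 h2
    have h4 := h3.atTop_div_const (by norm_num : (0:ℝ) < 2)
    convert h4 using 2 with s
    rw [abs_mul, abs_of_pos hc0]
  -- θ tends to 0
  have hUt : Tendsto U (cocompact ℝ) (𝓝 1) := by
    rw [hU_def]
    have h0 : Tendsto (fun s : ℝ => 1 / Real.cosh (κ₀ * s)) (cocompact ℝ) (𝓝 0) := by
      have := hcoshT.inv_tendsto_atTop; simp only [one_div]; exact this
    have h2 : Tendsto (fun s : ℝ => (1 / Real.cosh (κ₀ * s)) ^ 2) (cocompact ℝ) (𝓝 0) := by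
      simpa [pow_two] using h0.mul h0
    have h3 := (h2.const_mul (2 * a)).const_sub 1
    simpa using h3
  have hθT : Tendsto θ (cocompact ℝ) (𝓝 0) := by
    rw [hθfun]
    have := (Real.continuous_arccos.tendsto 1).comp hUt
    rw [Real.arccos_one] at this; exact this
  -- deriv θ tends to 0
  have hr0 : (0:ℝ) < a * (1 - a) := mul_pos ha0 (by linarith)
  obtain ⟨r, hr_def⟩ : ∃ r : ℝ, r = Real.sqrt (a * (1 - a)) := ⟨_, rfl⟩
  have hrpos : 0 < r := hr_def ▸ Real.sqrt_pos.2 hr0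
  have hr2 : r ^ 2 = a * (1 - a) := by rw [hr_def]; exact Real.sq_sqrt hr0.le
  have hbound : ∀ s : ℝ, ‖Θ1 s‖ ≤ (2 * a * κ₀ / r) / Real.cosh (κ₀ * s) := by
    intro s
    have hch := hchpos s
    have hch1' := hch1 s
    -- lower bound for W s
    have hwlb : 2 * r / Real.cosh (κ₀ * s) ≤ W s := by
      rw [hW_def]
      apply Real.le_sqrt_of_sq_le
      have e1 : (2 * r / Real.cosh (κ₀ * s)) ^ 2
          = 4 * (a * (1 - a)) * (1 / Real.cosh (κ₀ * s)) ^ 2 := by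
        rw [← hr2]; ring
      have e2 : 1 - (U s) ^ 2 = 4 * a * (1 / Real.cosh (κ₀ * s)) ^ 2
          - 4 * a ^ 2 * ((1 / Real.cosh (κ₀ * s)) ^ 2) ^ 2 := by
        rw [hU_def]; ring
      rw [e1, e2]
      have h1 := hHpos s
      have h2 := hHle s
      nlinarith [mul_nonneg (mul_nonneg (sq_nonneg a) (hHpos s).le)
        (sub_nonneg.2 (hHle s))]
    have hsinh_le : |Real.sinh (κ₀ * s)| ≤ Real.cosh (κ₀ * s) := by
      nlinarith [sq_abs (Real.sinh (κ₀ * s)), Real.cosh_sq (κ₀ * s),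
        abs_nonneg (Real.sinh (κ₀ * s))]
    have habs : |U' s| = 4 * a * κ₀ * |Real.sinh (κ₀ * s)| / (Real.cosh (κ₀ * s)) ^ 3 := by
      rw [hU'_def]
      rw [abs_div, abs_mul, abs_of_nonneg (by positivity : (0:ℝ) ≤ 4 * a * κ₀),
        abs_of_nonneg (by positivity : (0:ℝ) ≤ (Real.cosh (κ₀ * s)) ^ 3)]
    have hU'le : |U' s| ≤ 4 * a * κ₀ / (Real.cosh (κ₀ * s)) ^ 2 := by
      rw [habs]
      rw [div_le_div_iff₀ (by positivity) (by positivity)]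
      have : 4 * a * κ₀ * |Real.sinh (κ₀ * s)| ≤ 4 * a * κ₀ * Real.cosh (κ₀ * s) := by
        apply mul_le_mul_of_nonneg_left hsinh_le (by positivity)
      nlinarith [this, hchpos s]
    have hnorm : ‖Θ1 s‖ = |U' s| / W s := by
      rw [hΘ1_def, Real.norm_eq_abs, abs_div, abs_neg, abs_of_pos (hW0 s)]
    rw [hnorm]
    calc |U' s| / W s ≤ |U' s| / (2 * r / Real.cosh (κ₀ * s)) := by
          apply div_le_div_of_nonneg_left (abs_nonneg _) (by positivity) hwlb
      _ = |U' s| * Real.cosh (κ₀ * s) / (2 * r) := by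
          field_simp
      _ ≤ (4 * a * κ₀ / (Real.cosh (κ₀ * s)) ^ 2) * Real.cosh (κ₀ * s) / (2 * r) := by
          apply div_le_div_of_nonneg_right ?_ (by positivity)
          exact mul_le_mul_of_nonneg_right hU'le (hchpos s).le
      _ = (2 * a * κ₀ / r) / Real.cosh (κ₀ * s) := by
          field_simp
          ring
  have hθ'T : Tendsto (deriv θ) (cocompact ℝ) (𝓝 0) := by
    rw [hderivθ]
    apply squeeze_zero_norm hbound
    exact tendsto_const_nhds.div_atTop hcoshT
  exact ⟨hsmooth, hrange, hODE, hθT, hθ'T⟩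
end
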